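/- Let n ≥ 1 be an integer, k ≥ 0 an integer, σ ∈ (0,1), and set m = 2k + σ. There exists a constant C > 0 depending only on n, k, σ such that for every r > 0, every u ∈ C_c^∞(ℝ^n) with support contained in the closed ball of radius r centered at the origin, every x ∈ ℝ^n with |x| > r, and every y > 0, one has |∫_{ℝ^n} y^{2σ} ((−Δ)^k u)(ξ) (|x−ξ|² + y²)^{−(n+2σ)/2} dξ| ≤ C y^{2σ} ((|x|−r)² + y²)^{−(n+m+σ)/2} ∫_{ℝ^n} |u(ξ)| dξ. -/

import Mathlib

open MeasureTheory Real
open scoped ContDiff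

/-- The Laplacian on `ℝ^n`: sum of second partial derivatives. -/
noncomputable def lap {n : ℕ} (f : EuclideanSpace ℝ (Fin n) → ℝ) :
    EuclideanSpace ℝ (Fin n) → ℝ :=
  fun x => ∑ i, fderiv ℝ (fun z => fderiv ℝ f z (EuclideanSpace.single i 1)) x
    (EuclideanSpace.single i 1)

/-- `(-Δ)^k u = (-1)^k Δ^k u`. -/
noncomputable def negLapPow {n : ℕ} (k : ℕ) (f : EuclideanSpace ℝ (Fin n) → ℝ) :
    EuclideanSpace ℝ (Fin n) → ℝ :=
  fun x => (-1 : ℝ) ^ k * (lap^[k] f) x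

namespace Aux

variable {n : ℕ}

local notation "E" => EuclideanSpace ℝ (Fin n)

noncomputable def pd (v : E) (f : E → ℝ) : E → ℝ := fun ξ => fderiv ℝ f ξ v

lemma lap_eq (f : E → ℝ) : lap f = fun x => ∑ i,
    pd (EuclideanSpace.single i 1) (pd (EuclideanSpace.single i 1) f) x := rfl

lemma pd_contDiff {f : E → ℝ} (hf : ContDiff ℝ ∞ f) (v : E) : ContDiff ℝ ∞ (pd v f) :=
  (hf.fderiv_right (by simp)).clm_apply contDiff_const

lemma pd_hcs {f : E → ℝ} (hf : HasCompactSupport f) (v : E) : HasCompactSupport (pd v f) :=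
  hf.fderiv_apply ℝ v

lemma lap_contDiff {f : E → ℝ} (hf : ContDiff ℝ ∞ f) : ContDiff ℝ ∞ (lap f) := by
  rw [lap_eq]
  exact ContDiff.sum fun i _ => pd_contDiff (pd_contDiff hf _) _

lemma hcs_sum {ι : Type*} (s : Finset ι) (f : ι → E → ℝ)
    (h : ∀ i ∈ s, HasCompactSupport (f i)) :
    HasCompactSupport (fun x => ∑ i ∈ s, f i x) := by
  classical
  induction s using Finset.induction with
  | empty =>
      simp only [Finset.sum_empty]
      exact HasCompactSupport.intro isCompact_empty (fun x _ => rfl)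
  | @insert a s ha ih =>
      simp only [Finset.sum_insert ha]
      exact (h a (by simp)).add (ih fun i hi => h i (Finset.mem_insert_of_mem hi))

lemma lap_hcs {f : E → ℝ} (h'f : HasCompactSupport f) :
    HasCompactSupport (lap f) := by
  rw [lap_eq]
  exact hcs_sum _ _ fun i _ => pd_hcs (pd_hcs h'f _) _

lemma parts1 {f g : E → ℝ} (hf : ContDiff ℝ ∞ f) (h'f : HasCompactSupport f)
    (hg : ContDiff ℝ ∞ g) (v : E) :
    ∫ ξ, pd v f ξ * g ξ = -∫ ξ, f ξ * pd v g ξ := by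
  have h1 : Integrable (fun ξ => fderiv ℝ g ξ v * f ξ) :=
    (((pd_contDiff hg v).continuous).mul (hf.continuous)).integrable_of_hasCompactSupport
      h'f.mul_left
  have h2 : Integrable (fun ξ => g ξ * fderiv ℝ f ξ v) :=
    ((hg.continuous).mul ((pd_contDiff hf v).continuous)).integrable_of_hasCompactSupport
      (pd_hcs h'f v).mul_left
  have h3 : Integrable (fun ξ => g ξ * f ξ) :=
    ((hg.continuous).mul (hf.continuous)).integrable_of_hasCompactSupport h'f.mul_left
  have key := integral_mul_fderiv_eq_neg_fderiv_mul_of_integrable h1 h2 h3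
    (fun x _ => hg.differentiable (by simp) x) (fun x _ => hf.differentiable (by simp) x)
  have e1 : (fun ξ => pd v f ξ * g ξ) = (fun ξ => g ξ * fderiv ℝ f ξ v) :=
    funext fun ξ => mul_comm _ _
  have e2 : (fun ξ => f ξ * pd v g ξ) = (fun ξ => fderiv ℝ g ξ v * f ξ) :=
    funext fun ξ => mul_comm _ _
  rw [e1, e2, key]

lemma parts2 {f g : E → ℝ} (hf : ContDiff ℝ ∞ f) (h'f : HasCompactSupport f)
    (hg : ContDiff ℝ ∞ g) (v : E) :
    ∫ ξ, pd v (pd v f) ξ * g ξ = ∫ ξ, f ξ * pd v (pd v g) ξ := by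
  rw [parts1 (pd_contDiff hf v) (pd_hcs h'f v) hg v]
  rw [show (fun ξ => pd v f ξ * pd v g ξ) = fun ξ => pd v f ξ * (pd v g) ξ from rfl]
  rw [parts1 hf h'f (pd_contDiff hg v) v, neg_neg]

lemma parts_lap {f g : E → ℝ} (hf : ContDiff ℝ ∞ f) (h'f : HasCompactSupport f)
    (hg : ContDiff ℝ ∞ g) :
    ∫ ξ, lap f ξ * g ξ = ∫ ξ, f ξ * lap g ξ := by
  rw [lap_eq f, lap_eq g]
  simp_rw [Finset.sum_mul, Finset.mul_sum]
  rw [integral_finset_sum (f := fun i ξ => pd (EuclideanSpace.single i 1)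
      (pd (EuclideanSpace.single i 1) f) ξ * g ξ) _ (fun i _ => ((pd_contDiff (pd_contDiff hf _) _).continuous.mul
      hg.continuous).integrable_of_hasCompactSupport (pd_hcs (pd_hcs h'f _) _).mul_right),
    integral_finset_sum (f := fun i ξ => f ξ * pd (EuclideanSpace.single i 1)
      (pd (EuclideanSpace.single i 1) g) ξ) _ (fun i _ => (hf.continuous.mul
      (pd_contDiff (pd_contDiff hg _) _).continuous).integrable_of_hasCompactSupport
      h'f.mul_right)]
  exact Finset.sum_congr rfl fun i _ => parts2 hf h'f hg _

lemma lap_iter_contDiff {f : E → ℝ} (hf : ContDiff ℝ ∞ f) (k : ℕ) :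
    ContDiff ℝ ∞ (lap^[k] f) := by
  induction k with
  | zero => exact hf
  | succ k ih => rw [Function.iterate_succ_apply']; exact lap_contDiff ih

lemma lap_iter_hcs {f : E → ℝ} (h'f : HasCompactSupport f) (k : ℕ) :
    HasCompactSupport (lap^[k] f) := by
  induction k with
  | zero => exact h'f
  | succ k ih => rw [Function.iterate_succ_apply']; exact lap_hcs ih

lemma parts_lap_iter {f : E → ℝ} (hf : ContDiff ℝ ∞ f) (h'f : HasCompactSupport f) (k : ℕ) :
    ∀ g : E → ℝ, ContDiff ℝ ∞ g →
      ∫ ξ, lap^[k] f ξ * g ξ = ∫ ξ, f ξ * lap^[k] g ξ := by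
  induction k with
  | zero => intro g hg; rfl
  | succ k ih =>
      intro g hg
      rw [Function.iterate_succ_apply']
      rw [parts_lap (lap_iter_contDiff hf k) (lap_iter_hcs h'f k) hg]
      rw [ih (lap g) (lap_contDiff hg)]
      simp_rw [← Function.iterate_succ_apply]

section Kernel

lemma q_pos (x : E) (y : ℝ) (hy : y ≠ 0) (ξ : E) : 0 < ‖x - ξ‖ ^ 2 + y ^ 2 := by positivity

lemma norm_sq_sum (v : E) : ‖v‖ ^ 2 = ∑ i, (v i) ^ 2 := by
  rw [EuclideanSpace.norm_eq, Real.sq_sqrt (by positivity)]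
  exact Finset.sum_congr rfl fun i _ => by rw [Real.norm_eq_abs, sq_abs]

lemma hasFDerivAt_q (x : E) (y : ℝ) (ξ : E) : HasFDerivAt (fun ζ : E => ‖x - ζ‖ ^ 2 + y ^ 2)
    ((2:ℕ) • ((innerSL ℝ (x - ξ)).comp (-(ContinuousLinearMap.id ℝ E)))) ξ := by
  have h : HasFDerivAt (fun ζ : E => x - ζ) (-(ContinuousLinearMap.id ℝ E)) ξ := by
    simpa using (hasFDerivAt_const x ξ).fun_sub (hasFDerivAt_id (𝕜 := ℝ) ξ)
  exact h.norm_sq.add_const (y ^ 2)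

lemma hasFDerivAt_qc (x : E) (y : ℝ) (c : ℝ) (hy : y ≠ 0) (ξ : E) :
    HasFDerivAt (fun ζ : E => (‖x - ζ‖ ^ 2 + y ^ 2) ^ c)
      ((c * (‖x - ξ‖ ^ 2 + y ^ 2) ^ (c - 1)) •
        ((2:ℕ) • ((innerSL ℝ (x - ξ)).comp (-(ContinuousLinearMap.id ℝ E))))) ξ := by
  have h := (Real.hasDerivAt_rpow_const (p := c) (Or.inl (q_pos x y hy ξ).ne')).comp_hasFDerivAt ξ
    (hasFDerivAt_q x y ξ)
  exact h

lemma pd_qc (x : E) (y : ℝ) (c : ℝ) (hy : y ≠ 0) (i : Fin n) :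
    pd (EuclideanSpace.single i 1) (fun ζ : E => (‖x - ζ‖ ^ 2 + y ^ 2) ^ c)
      = fun ξ => (-2 * c) * (((x - ξ) i) * (‖x - ξ‖ ^ 2 + y ^ 2) ^ (c - 1)) := by
  funext ξ
  rw [pd, (hasFDerivAt_qc x y c hy ξ).fderiv]
  simp [real_inner_comm, EuclideanSpace.inner_single_left, EuclideanSpace.inner_single_right]
  ring

lemma pd2_qc (x : E) (y : ℝ) (c : ℝ) (hy : y ≠ 0) (i : Fin n) (ξ : E) :
    pd (EuclideanSpace.single i 1)
      (pd (EuclideanSpace.single i 1) (fun ζ : E => (‖x - ζ‖ ^ 2 + y ^ 2) ^ c)) ξ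
      = 2 * c * (‖x - ξ‖ ^ 2 + y ^ 2) ^ (c - 1)
        + 4 * c * (c - 1) * ((x - ξ) i) ^ 2 * (‖x - ξ‖ ^ 2 + y ^ 2) ^ (c - 2) := by
  rw [pd_qc x y c hy i]
  have ha : HasFDerivAt (fun ζ : E => (x - ζ) i) (-(EuclideanSpace.proj (𝕜 := ℝ) i)) ξ := by
    have : (fun ζ : E => (x - ζ) i) = fun ζ : E => x i - EuclideanSpace.proj (𝕜 := ℝ) i ζ := by
      funext ζ; simp [EuclideanSpace.proj]
    rw [this]
    simpa using (hasFDerivAt_const (x i) ξ).fun_sub ((EuclideanSpace.proj (𝕜 := ℝ) i).hasFDerivAt)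
  have hb := hasFDerivAt_qc x y (c - 1) hy ξ
  have hprod := ((ha.fun_mul hb).const_mul ((-2) * c))
  rw [pd, hprod.fderiv]
  have e1 : (EuclideanSpace.single (𝕜 := ℝ) i 1) i = 1 := by
    simp [EuclideanSpace.single_apply]
  simp [real_inner_comm, EuclideanSpace.inner_single_left, EuclideanSpace.inner_single_right, e1]
  rw [show c - 1 - 1 = c - 2 by ring]
  ring

lemma lap_qc (x : E) (y : ℝ) (c : ℝ) (hy : y ≠ 0) (ξ : E) :
    lap (fun ζ : E => (‖x - ζ‖ ^ 2 + y ^ 2) ^ c) ξ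
      = (2 * n * c + 4 * c * (c - 1)) * (‖x - ξ‖ ^ 2 + y ^ 2) ^ (c - 1)
        - 4 * c * (c - 1) * y ^ 2 * (‖x - ξ‖ ^ 2 + y ^ 2) ^ (c - 2) := by
  have h0 : lap (fun ζ : E => (‖x - ζ‖ ^ 2 + y ^ 2) ^ c) ξ
      = ∑ i : Fin n, (2 * c * (‖x - ξ‖ ^ 2 + y ^ 2) ^ (c - 1)
        + 4 * c * (c - 1) * ((x - ξ) i) ^ 2 * (‖x - ξ‖ ^ 2 + y ^ 2) ^ (c - 2)) := by
    rw [lap_eq]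
    exact Finset.sum_congr rfl fun i _ => pd2_qc x y c hy i ξ
  rw [h0, Finset.sum_add_distrib, Finset.sum_const, Finset.card_univ, Fintype.card_fin]
  have h1 : ∑ i : Fin n, 4 * c * (c - 1) * ((x - ξ) i) ^ 2 * (‖x - ξ‖ ^ 2 + y ^ 2) ^ (c - 2)
      = 4 * c * (c - 1) * ‖x - ξ‖ ^ 2 * (‖x - ξ‖ ^ 2 + y ^ 2) ^ (c - 2) := by
    rw [← Finset.sum_mul]
    congr 1
    rw [norm_sq_sum (x - ξ), Finset.mul_sum]
  rw [h1]
  have h3 : (‖x - ξ‖ ^ 2 + y ^ 2) ^ (c - 1)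
      = (‖x - ξ‖ ^ 2 + y ^ 2) ^ (c - 2) * (‖x - ξ‖ ^ 2 + y ^ 2) := by
    rw [show c - 1 = c - 2 + 1 by ring, Real.rpow_add_one (q_pos x y hy ξ).ne']
  simp only [nsmul_eq_mul]
  linear_combination (-(4 * c * (c - 1))) * h3

lemma contDiff_qc (x : E) (y : ℝ) (c : ℝ) (hy : y ≠ 0) :
    ContDiff ℝ ∞ (fun ζ : E => (‖x - ζ‖ ^ 2 + y ^ 2) ^ c) := by
  rw [contDiff_iff_contDiffAt]
  intro ξ
  have h1 : ContDiffAt ℝ ∞ (fun ζ : E => ‖x - ζ‖ ^ 2 + y ^ 2) ξ :=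
    (((contDiff_const.sub contDiff_id).norm_sq ℝ).add contDiff_const).contDiffAt
  exact (Real.contDiffAt_rpow_const_of_ne (q_pos x y hy ξ).ne').comp ξ h1

lemma pd_sum {ι : Type*} (s : Finset ι) (f : ι → E → ℝ)
    (h : ∀ j ∈ s, Differentiable ℝ (f j)) (v : E) :
    pd v (fun ζ => ∑ j ∈ s, f j ζ) = fun z => ∑ j ∈ s, pd v (f j) z := by
  funext z
  simp only [pd]
  rw [fderiv_fun_sum fun j hj => (h j hj).differentiableAt]
  simp

lemma pd_const_mul (a : ℝ) (f : E → ℝ) (h : Differentiable ℝ f) (v : E) :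
    pd v (fun ζ => a * f ζ) = fun z => a * pd v f z := by
  funext z
  simp only [pd]
  rw [fderiv_const_mul h.differentiableAt a]
  simp

lemma lap_sum {ι : Type*} (s : Finset ι) (f : ι → E → ℝ)
    (h : ∀ j ∈ s, ContDiff ℝ ∞ (f j)) (ξ : E) :
    lap (fun ζ => ∑ j ∈ s, f j ζ) ξ = ∑ j ∈ s, lap (f j) ξ := by
  have hd : ∀ j ∈ s, Differentiable ℝ (f j) := fun j hj => (h j hj).differentiable (by simp)
  have e1 : ∀ v : E, pd v (fun ζ => ∑ j ∈ s, f j ζ) = fun z => ∑ j ∈ s, pd v (f j) z :=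
    fun v => pd_sum s f hd v
  rw [lap_eq]
  simp only []
  have e2 : ∀ i : Fin n, pd (EuclideanSpace.single i 1)
      (pd (EuclideanSpace.single i 1) (fun ζ => ∑ j ∈ s, f j ζ)) ξ
      = ∑ j ∈ s, pd (EuclideanSpace.single i 1) (pd (EuclideanSpace.single i 1) (f j)) ξ := by
    intro i
    rw [e1]
    rw [pd_sum s _ (fun j hj =>
      (pd_contDiff (h j hj) (EuclideanSpace.single i 1)).differentiable (by simp))]
  calc (∑ i : Fin n, pd (EuclideanSpace.single i 1)
          (pd (EuclideanSpace.single i 1) (fun ζ => ∑ j ∈ s, f j ζ)) ξ)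
      = ∑ i : Fin n, ∑ j ∈ s, pd (EuclideanSpace.single i 1)
          (pd (EuclideanSpace.single i 1) (f j)) ξ := Finset.sum_congr rfl fun i _ => e2 i
    _ = ∑ j ∈ s, ∑ i : Fin n, pd (EuclideanSpace.single i 1)
          (pd (EuclideanSpace.single i 1) (f j)) ξ := Finset.sum_comm
    _ = ∑ j ∈ s, lap (f j) ξ :=
        Finset.sum_congr rfl fun j _ => (congrFun (lap_eq (f j)) ξ).symm

lemma lap_const_mul (a : ℝ) (f : E → ℝ) (hf : ContDiff ℝ ∞ f) (ξ : E) :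
    lap (fun ζ => a * f ζ) ξ = a * lap f ξ := by
  have hd : Differentiable ℝ f := hf.differentiable (by simp)
  rw [lap_eq]
  simp only []
  have e2 : ∀ i : Fin n, pd (EuclideanSpace.single i 1)
      (pd (EuclideanSpace.single i 1) (fun ζ => a * f ζ)) ξ
      = a * pd (EuclideanSpace.single i 1) (pd (EuclideanSpace.single i 1) f) ξ := by
    intro i
    rw [pd_const_mul a f hd]
    rw [pd_const_mul a _ ((pd_contDiff hf (EuclideanSpace.single i 1)).differentiable (by simp))]
  rw [lap_eq]
  rw [Finset.sum_congr rfl fun i _ => e2 i, ← Finset.mul_sum]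

lemma key (c₀ : ℝ) (k : ℕ) : ∃ c : ℕ → ℝ, ∀ (x : E) (y : ℝ), y ≠ 0 → ∀ ξ : E,
    lap^[k] (fun ζ : E => (‖x - ζ‖ ^ 2 + y ^ 2) ^ c₀) ξ
      = ∑ i ∈ Finset.range (k + 1),
          c i * y ^ (2 * i) * (‖x - ξ‖ ^ 2 + y ^ 2) ^ (c₀ - k - i) := by
  induction k with
  | zero =>
      refine ⟨fun _ => 1, fun x y hy ξ => ?_⟩
      simp
  | succ k ih =>
      obtain ⟨c, hc⟩ := ih
      set A : ℕ → ℝ := fun i => 2 * n * (c₀ - k - i) + 4 * (c₀ - k - i) * ((c₀ - k - i) - 1)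
        with hA
      set B : ℕ → ℝ := fun i => 4 * (c₀ - k - i) * ((c₀ - k - i) - 1) with hB
      refine ⟨fun j => (if j < k + 1 then c j * A j else 0)
        + (if j = 0 then 0 else -(c (j - 1) * B (j - 1))), fun x y hy ξ => ?_⟩
      rw [Function.iterate_succ_apply']
      have hfun : lap^[k] (fun ζ : E => (‖x - ζ‖ ^ 2 + y ^ 2) ^ c₀)
          = fun ζ => ∑ i ∈ Finset.range (k + 1),
              c i * y ^ (2 * i) * (‖x - ζ‖ ^ 2 + y ^ 2) ^ (c₀ - k - i) :=
        funext fun ζ => hc x y hy ζ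
      rw [hfun]
      rw [lap_sum _ _ (fun j hj => contDiff_const.mul (contDiff_qc x y _ hy)) ξ]
      have hterm : ∀ j ∈ Finset.range (k + 1),
          lap (fun ζ : E => c j * y ^ (2 * j) * (‖x - ζ‖ ^ 2 + y ^ 2) ^ (c₀ - k - j)) ξ
          = c j * A j * y ^ (2 * j) * (‖x - ξ‖ ^ 2 + y ^ 2) ^ (c₀ - (k + 1 : ℕ) - j)
            + (-(c j * B j)) * y ^ (2 * (j + 1))
              * (‖x - ξ‖ ^ 2 + y ^ 2) ^ (c₀ - (k + 1 : ℕ) - (j + 1 : ℕ)) := by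
        intro j hj
        have e0 : (fun ζ : E => c j * y ^ (2 * j) * (‖x - ζ‖ ^ 2 + y ^ 2) ^ (c₀ - k - j))
            = fun ζ => (c j * y ^ (2 * j)) * ((‖x - ζ‖ ^ 2 + y ^ 2) ^ (c₀ - k - j)) := rfl
        rw [e0, lap_const_mul _ _ (contDiff_qc x y _ hy) ξ, lap_qc x y _ hy ξ]
        have eA : c₀ - (k : ℝ) - (j : ℝ) - 1 = c₀ - ((k + 1 : ℕ) : ℝ) - (j : ℝ) := by
          push_cast; ring
        have eB : c₀ - (k : ℝ) - (j : ℝ) - 2 = c₀ - ((k + 1 : ℕ) : ℝ) - ((j + 1 : ℕ) : ℝ) := by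
          push_cast; ring
        rw [eA, eB, hA, hB]
        simp only []
        push_cast
        ring
      rw [Finset.sum_congr rfl hterm, Finset.sum_add_distrib]
      simp only [add_mul]
      rw [Finset.sum_add_distrib]
      congr 1
      · symm
        rw [Finset.sum_range_succ, if_neg (lt_irrefl _), zero_mul, zero_mul, add_zero]
        refine Finset.sum_congr rfl fun j hj => ?_
        rw [if_pos (Finset.mem_range.1 hj)]
      · symm
        rw [Finset.sum_range_succ']
        rw [if_pos rfl, zero_mul, zero_mul, add_zero]
        refine Finset.sum_congr rfl fun j hj => ?_
        rw [if_neg (Nat.succ_ne_zero j), Nat.add_sub_cancel]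

end Kernel

end Aux

theorem stmt_0 (n k : ℕ) (hn : 1 ≤ n) (σ : ℝ) (hσ : σ ∈ Set.Ioo (0:ℝ) 1) :
    ∃ C : ℝ, 0 < C ∧
      ∀ (r : ℝ), 0 < r →
      ∀ u : EuclideanSpace ℝ (Fin n) → ℝ, ContDiff ℝ (⊤ : ℕ∞) u → HasCompactSupport u →
        tsupport u ⊆ Metric.closedBall 0 r →
      ∀ x : EuclideanSpace ℝ (Fin n), r < ‖x‖ →
      ∀ y : ℝ, 0 < y →
        |∫ ξ, y ^ (2 * σ) * negLapPow k u ξ *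
            (‖x - ξ‖ ^ 2 + y ^ 2) ^ (-((n : ℝ) + 2 * σ) / 2)| ≤
          C * y ^ (2 * σ) *
            ((‖x‖ - r) ^ 2 + y ^ 2) ^ (-((n : ℝ) + (2 * k + σ) + σ) / 2) *
            ∫ ξ, |u ξ| := by
  obtain ⟨σpos, σlt⟩ := hσ
  set c₀ : ℝ := -((n : ℝ) + 2 * σ) / 2 with hc₀
  have hc₀neg : c₀ < 0 := by
    rw [hc₀]
    have : (0:ℝ) < (n:ℝ) + 2 * σ := by positivity
    linarith
  obtain ⟨c, hc⟩ := Aux.key (n := n) c₀ k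
  set S : ℝ := ∑ i ∈ Finset.range (k + 1), |c i| with hS
  have hSnn : 0 ≤ S := Finset.sum_nonneg fun i _ => abs_nonneg _
  refine ⟨S + 1, by positivity, ?_⟩
  intro r hr u hu hcs hsupp x hx y hy
  have hy' : y ≠ 0 := hy.ne'
  have hu' : ContDiff ℝ ∞ u := hu.of_le (by simp)
  have hexp : -((n : ℝ) + (2 * ↑k + σ) + σ) / 2 = c₀ - k := by rw [hc₀]; ring
  rw [hexp]
  set D : ℝ := ((‖x‖ - r) ^ 2 + y ^ 2) ^ (c₀ - (k:ℝ)) with hD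
  have hq0 : (0:ℝ) < (‖x‖ - r) ^ 2 + y ^ 2 := by positivity
  have hDpos : 0 < D := Real.rpow_pos_of_pos hq0 _
  have hKsm : ContDiff ℝ ∞ (fun ζ : EuclideanSpace ℝ (Fin n) => (‖x - ζ‖ ^ 2 + y ^ 2) ^ c₀) :=
    Aux.contDiff_qc x y c₀ hy'
  set L : EuclideanSpace ℝ (Fin n) → ℝ :=
    lap^[k] (fun ζ : EuclideanSpace ℝ (Fin n) => (‖x - ζ‖ ^ 2 + y ^ 2) ^ c₀) with hL
  have hLsm : ContDiff ℝ ∞ L := Aux.lap_iter_contDiff hKsm k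
  -- Step 1: pull out constants
  have e1 : ∀ ξ : EuclideanSpace ℝ (Fin n),
      y ^ (2 * σ) * negLapPow k u ξ * (‖x - ξ‖ ^ 2 + y ^ 2) ^ c₀
      = (y ^ (2 * σ) * (-1 : ℝ) ^ k) *
          (lap^[k] u ξ * (‖x - ξ‖ ^ 2 + y ^ 2) ^ c₀) := by
    intro ξ
    simp only [negLapPow]
    ring
  simp only [e1]
  rw [integral_const_mul, abs_mul]
  have e2 : |y ^ (2 * σ) * (-1 : ℝ) ^ k| = y ^ (2 * σ) := by
    rw [abs_mul, abs_pow, abs_neg, abs_one, one_pow, mul_one,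
      abs_of_pos (Real.rpow_pos_of_pos hy _)]
  rw [e2]
  -- Step 2: integration by parts
  have P : (∫ ξ, lap^[k] u ξ * (‖x - ξ‖ ^ 2 + y ^ 2) ^ c₀)
      = ∫ ξ, u ξ * L ξ :=
    Aux.parts_lap_iter hu' hcs k _ hKsm
  rw [P]
  -- Step 3: pointwise bound on L over the support of u
  have hLbound : ∀ ξ ∈ tsupport u, |L ξ| ≤ S * D := by
    intro ξ hξ
    have hξr : ‖ξ‖ ≤ r := by
      have := hsupp hξ
      rwa [Metric.mem_closedBall, dist_zero_right] at this
    have hxr0 : 0 ≤ ‖x‖ - r := by linarith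
    have hxξ : ‖x‖ - r ≤ ‖x - ξ‖ := by
      have h1 : ‖x‖ - ‖ξ‖ ≤ ‖x - ξ‖ := norm_sub_norm_le x ξ
      linarith
    have hqξ : (0:ℝ) < ‖x - ξ‖ ^ 2 + y ^ 2 := by positivity
    have hq1 : (‖x‖ - r) ^ 2 + y ^ 2 ≤ ‖x - ξ‖ ^ 2 + y ^ 2 := by
      have := pow_le_pow_left₀ hxr0 hxξ 2
      linarith
    have hterm : ∀ i ∈ Finset.range (k + 1),
        |c i * y ^ (2 * i) * (‖x - ξ‖ ^ 2 + y ^ 2) ^ (c₀ - k - i)| ≤ |c i| * D := by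
      intro i _
      rw [abs_mul, abs_mul, abs_pow, abs_of_pos (Real.rpow_pos_of_pos hqξ _)]
      have hstep : |y| ^ (2 * i) * (‖x - ξ‖ ^ 2 + y ^ 2) ^ (c₀ - k - i) ≤ D := by
        have hy2 : y ^ 2 ≤ ‖x - ξ‖ ^ 2 + y ^ 2 := le_add_of_nonneg_left (by positivity)
        have hpow : |y| ^ (2 * i) ≤ (‖x - ξ‖ ^ 2 + y ^ 2) ^ i := by
          rw [pow_mul, sq_abs]
          exact pow_le_pow_left₀ (sq_nonneg y) hy2 i
        have hsplit : (‖x - ξ‖ ^ 2 + y ^ 2) ^ (c₀ - k - i)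
            = (‖x - ξ‖ ^ 2 + y ^ 2) ^ (c₀ - (k:ℝ)) / (‖x - ξ‖ ^ 2 + y ^ 2) ^ (i:ℕ) := by
          rw [Real.rpow_sub hqξ, Real.rpow_natCast]
        have hmono : (‖x - ξ‖ ^ 2 + y ^ 2) ^ (c₀ - (k:ℝ)) ≤ D := by
          rw [hD]
          exact Real.rpow_le_rpow_of_nonpos hq0 hq1 (by
            have : (0:ℝ) ≤ (k:ℝ) := Nat.cast_nonneg k
            linarith)
        calc |y| ^ (2 * i) * (‖x - ξ‖ ^ 2 + y ^ 2) ^ (c₀ - k - i)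
            ≤ (‖x - ξ‖ ^ 2 + y ^ 2) ^ i * (‖x - ξ‖ ^ 2 + y ^ 2) ^ (c₀ - k - i) := by
              apply mul_le_mul_of_nonneg_right hpow (Real.rpow_nonneg hqξ.le _)
          _ = (‖x - ξ‖ ^ 2 + y ^ 2) ^ (c₀ - (k:ℝ)) := by
              rw [hsplit]
              field_simp
          _ ≤ D := hmono
      calc |c i| * |y| ^ (2 * i) * (‖x - ξ‖ ^ 2 + y ^ 2) ^ (c₀ - k - i)
          = |c i| * (|y| ^ (2 * i) * (‖x - ξ‖ ^ 2 + y ^ 2) ^ (c₀ - k - i)) := by ring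
        _ ≤ |c i| * D := mul_le_mul_of_nonneg_left hstep (abs_nonneg _)
    calc |L ξ| = |∑ i ∈ Finset.range (k + 1),
          c i * y ^ (2 * i) * (‖x - ξ‖ ^ 2 + y ^ 2) ^ (c₀ - k - i)| := by
            rw [hL, hc x y hy' ξ]
      _ ≤ ∑ i ∈ Finset.range (k + 1),
            |c i * y ^ (2 * i) * (‖x - ξ‖ ^ 2 + y ^ 2) ^ (c₀ - k - i)| :=
          Finset.abs_sum_le_sum_abs _ _
      _ ≤ ∑ i ∈ Finset.range (k + 1), |c i| * D := Finset.sum_le_sum hterm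
      _ = S * D := by rw [← Finset.sum_mul]
  -- Step 4: integral bound
  have hintu : Integrable (fun ξ : EuclideanSpace ℝ (Fin n) => |u ξ|) :=
    (hu'.continuous.abs).integrable_of_hasCompactSupport hcs.abs
  have hintuL : Integrable (fun ξ : EuclideanSpace ℝ (Fin n) => |u ξ * L ξ|) :=
    ((hu'.continuous.mul hLsm.continuous).abs).integrable_of_hasCompactSupport
      hcs.mul_right.abs
  have hptwise : ∀ ξ : EuclideanSpace ℝ (Fin n), |u ξ * L ξ| ≤ S * D * |u ξ| := by
    intro ξ
    by_cases hmem : ξ ∈ tsupport u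
    · rw [abs_mul]
      calc |u ξ| * |L ξ| ≤ |u ξ| * (S * D) :=
            mul_le_mul_of_nonneg_left (hLbound ξ hmem) (abs_nonneg _)
        _ = S * D * |u ξ| := by ring
    · rw [image_eq_zero_of_notMem_tsupport hmem]
      simp
  have hIabs : |∫ ξ, u ξ * L ξ| ≤ ∫ ξ, |u ξ * L ξ| := by
    have h := norm_integral_le_integral_norm (μ := volume) (fun ξ => u ξ * L ξ)
    simp only [Real.norm_eq_abs] at h
    exact h
  have hImono : (∫ ξ, |u ξ * L ξ|) ≤ ∫ ξ, S * D * |u ξ| :=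
    integral_mono hintuL (hintu.const_mul _) hptwise
  have hIconst : (∫ ξ, S * D * |u ξ|) = S * D * ∫ ξ, |u ξ| := integral_const_mul _ _
  have hInn : 0 ≤ ∫ ξ, |u ξ| := integral_nonneg fun ξ => abs_nonneg _
  have hyσ : 0 < y ^ (2 * σ) := Real.rpow_pos_of_pos hy _
  calc y ^ (2 * σ) * |∫ ξ, u ξ * L ξ|
      ≤ y ^ (2 * σ) * (S * D * ∫ ξ, |u ξ|) := by
        apply mul_le_mul_of_nonneg_left _ hyσ.le
        exact hIabs.trans (hImono.trans (le_of_eq hIconst))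
    _ ≤ (S + 1) * y ^ (2 * σ) * D * ∫ ξ, |u ξ| := by
        have : S * D ≤ (S + 1) * D := by nlinarith
        nlinarith [mul_le_mul_of_nonneg_right this hInn, hyσ.le]
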